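/- Fix L ≥ 3 and let f : ℝ^L → ℝ, f(x) = Σ_{j=1}^L c_j (Π_{k=j+1}^{L} x_k) x_j², with all c_j ≠ 0. Then f cannot be computed by any single softmax-free causal attention head of the form g(x) = w · Σ_{j=1}^L x_j² x_L, w ∈ ℝ. -/
import Mathlib


theorem stmt15 (L : ℕ) (hL : 3 ≤ L) (c : ℕ → ℝ)
    (hc : ∀ j ∈ Finset.Icc 1 L, c j ≠ 0) (w : ℝ) :
    ¬ ∀ x : ℕ → ℝ,
      w * ∑ j ∈ Finset.Icc 1 L, x j ^ 2 * x L
        = ∑ j ∈ Finset.Icc 1 L, c j * (∏ k ∈ Finset.Icc (j + 1) L, x k) * x j ^ 2 := by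
  intro h
  have h1mem : (1 : ℕ) ∈ Finset.Icc 1 L := by simp; omega
  have hL2 : L ≠ 2 := by omega
  set x2 : ℕ → ℝ := fun k => if k = 2 then -1 else 1 with hx2
  have h1 := h (fun _ => 1)
  have h2 := h x2
  simp only [one_pow, mul_one, Finset.prod_const_one] at h1
  -- h1 : w * ∑ 1 = ∑ c j
  have e1 : ∑ j ∈ Finset.Icc 1 L, x2 j ^ 2 * x2 L = ∑ j ∈ Finset.Icc 1 L, (1 : ℝ) := by
    refine Finset.sum_congr rfl fun j _ => ?_
    simp only [hx2, hL2, if_false]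
    split_ifs <;> ring
  have e2 : ∑ j ∈ Finset.Icc 1 L, c j * (∏ k ∈ Finset.Icc (j + 1) L, x2 k) * x2 j ^ 2
      = ∑ j ∈ Finset.Icc 1 L, c j * (if j = 1 then -1 else 1) := by
    refine Finset.sum_congr rfl fun j hj => ?_
    simp only [Finset.mem_Icc] at hj
    have hp : (∏ k ∈ Finset.Icc (j + 1) L, x2 k) = if j = 1 then (-1 : ℝ) else 1 := by
      by_cases hj1 : j = 1
      · subst hj1
        simp only [if_true]
        rw [Finset.prod_eq_single 2]
        · simp [hx2]
        · intro b hb hb2; simp [hx2, hb2]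
        · intro hb; exfalso; apply hb; simp [Finset.mem_Icc]; omega
      · simp only [hj1, if_false]
        apply Finset.prod_eq_one
        intro k hk
        simp only [Finset.mem_Icc] at hk
        have : k ≠ 2 := by omega
        simp [hx2, this]
    have hsq : x2 j ^ 2 = 1 := by
      simp only [hx2]; split_ifs <;> ring
    rw [hp, hsq, mul_one]
  rw [e1, e2] at h2
  have key : ∑ j ∈ Finset.Icc 1 L, c j
      - ∑ j ∈ Finset.Icc 1 L, c j * (if j = 1 then -1 else 1) = 0 := by
    rw [← h1, ← h2]; ring
  rw [← Finset.sum_sub_distrib] at key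
  have key2 : ∑ j ∈ Finset.Icc 1 L, (c j - c j * (if j = 1 then -1 else 1))
      = ∑ j ∈ Finset.Icc 1 L, (if j = 1 then 2 * c j else 0) := by
    refine Finset.sum_congr rfl fun j _ => ?_
    split_ifs <;> ring
  rw [key2, Finset.sum_ite_eq' _ 1 (fun j => 2 * c j), if_pos h1mem] at key
  have : c 1 = 0 := by linarith
  exact hc 1 h1mem this
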